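/- If the Hamming distance δ between h and h' satisfies δ ≥ (1 − α') + (2/3)(1 − α), where 1 − α > 0 is the error rate of h and 1 − α' the error rate of h', then the Anna Karenina test T_b returns 0 with probability at least 2/3 on the pair (h, h'). Combined with the guarantee P[T_b = 1] = 1 when h = h', this makes T_b a valid property tester (in the > 2/3 sense) for distinguishing h = h' from pairs at Hamming distance at least (1 − α') + (2/3)(1 − α). -/
import Mathlib


open MeasureTheory ProbabilityTheory

/-- if δ ≥ (1 − α') + (2/3)(1 − α), then the AKH test returns 0 with
probability at least 2/3 on (h, h'); together with P[T_b = 1] = 1 when h = h',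
T_b is a valid (2/3)-property tester. -/
theorem akh_property_tester {X Y : Type*} [MeasurableSpace X]
    (μ : Measure X) [IsProbabilityMeasure μ]
    (c h h' : X → Y)
    (hA : MeasurableSet {x | h x ≠ h' x})
    (hB : MeasurableSet {x | h x ≠ c x})
    (α α' δ : ℝ)
    (hα : α = (μ {x | h x = c x}).toReal)
    (hα' : α' = (μ {x | h' x = c x}).toReal)
    (hδ : δ = (μ {x | h x ≠ h' x}).toReal)
    (hαlt : α < 1)
    (hpos : μ {x | h x ≠ c x} ≠ 0)
    (hfar : δ ≥ (1 - α') + (2 / 3) * (1 - α)) :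
    ((μ[|{x | h x ≠ c x}]) {x | h x ≠ h' x}).toReal ≥ 2 / 3
    ∧ (h = h' → (μ[|{x | h x ≠ c x}]) {x | h x = h' x} = 1) := by
  set A := {x | h x ≠ h' x} with hAdef
  set B := {x | h x ≠ c x} with hBdef
  have hABsum : μ (A ∩ B) + μ (A \ B) = μ A := measure_inter_add_diff A hB
  -- (μ B).toReal = 1 - α
  have hcompl : {x | h x = c x} = Bᶜ := by ext x; simp [hBdef]
  have htB : (μ B).toReal = 1 - α := by
    have h1 : μ Bᶜ = 1 - μ B := prob_compl_eq_one_sub hB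
    have h2 : (μ Bᶜ).toReal = 1 - (μ B).toReal := by
      rw [h1, ENNReal.toReal_sub_of_le prob_le_one (by norm_num)]
      simp
    rw [hα, hcompl, h2]; ring
  have hBpos : (0:ℝ) < 1 - α := by linarith
  -- μ (A \ B) ≤ 1 - α'
  have hsub : {x | h' x = c x} ⊆ (A \ B)ᶜ := by
    intro x hx hxAB
    have h1 : h x ≠ h' x := hxAB.1
    have h2 : h x = c x := by
      have := hxAB.2; simpa [hBdef] using this
    exact h1 (h2.trans hx.symm)
  have hdiff : (μ (A \ B)).toReal ≤ 1 - α' := by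
    have h1 : μ {x | h' x = c x} ≤ μ ((A \ B)ᶜ) := measure_mono hsub
    have h2 : μ ((A \ B)ᶜ) = 1 - μ (A \ B) := prob_compl_eq_one_sub (hA.diff hB)
    have h3 : (μ ((A \ B)ᶜ)).toReal = 1 - (μ (A \ B)).toReal := by
      rw [h2, ENNReal.toReal_sub_of_le prob_le_one (by norm_num)]; simp
    have h4 : α' ≤ (μ ((A \ B)ᶜ)).toReal := by
      rw [hα']
      exact ENNReal.toReal_mono (measure_ne_top _ _) h1
    linarith [h3 ▸ h4]
  -- μ (A ∩ B) ≥ δ - (1 - α')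
  have hAint : (μ (A ∩ B)).toReal = δ - (μ (A \ B)).toReal := by
    have := congrArg ENNReal.toReal hABsum
    rw [ENNReal.toReal_add (measure_ne_top _ _) (measure_ne_top _ _)] at this
    rw [hδ]; linarith [this]
  constructor
  · rw [cond_apply hB μ A, ENNReal.toReal_mul, ENNReal.toReal_inv]
    have hBA : μ (B ∩ A) = μ (A ∩ B) := by rw [Set.inter_comm]
    rw [hBA, htB, ge_iff_le, inv_mul_eq_div, le_div_iff₀ hBpos]
    calc (2:ℝ) / 3 * (1 - α) ≤ δ - (1 - α') := by linarith
      _ ≤ (μ (A ∩ B)).toReal := by rw [hAint]; linarith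
  · intro hhh
    have : {x | h x = h' x} = Set.univ := by ext x; simp [hhh]
    rw [this]
    have : IsProbabilityMeasure (μ[|B]) := cond_isProbabilityMeasure hpos
    exact measure_univ
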